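/- Let A be an n×n real matrix (n ≥ 2) having a real eigenpair (λ, v), i.e. Av = λv with λ ∈ ℝ, where v ∈ ℝ^n has no zero components, and let D = diag(v). Then for every p ∈ ℕ ∪ {∞} with p ≥ 1 and every positive integer k: |det(A)| ≤ |λ| · (τ_p(D^{-1} A^k D))^{(n−1)/k}. In particular, |det(A)| ≤ |λ| · τ_p(D^{-1} A^{n−1} D). -/

import Mathlib

open Matrix
open scoped ENNReal

/-- Non-increasing (descending) sort of a list of reals. -/
noncomputable def sortDesc (l : List ℝ) : List ℝ := (l.insertionSort (· ≤ ·)).reverse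

/-- Given the descending rearrangement `l` of `n` numbers, the sum of the largest
(about) half minus the sum of the smallest (about) half, skipping the middle
element when `n` is odd. -/
noncomputable def halfSumDiff (n : ℕ) (l : List ℝ) : ℝ :=
  if n % 2 = 1 then (l.take ((n - 1) / 2)).sum - (l.drop ((n + 1) / 2)).sum
  else (l.take (n / 2)).sum - (l.drop (n / 2)).sum

/-- Radius of the `i`-th Gershgorin disc of the second type of `M`, computed from
the `i`-th row of `M` with the diagonal entry replaced by `0`. -/
noncomputable def secondTypeRadius {n : ℕ} (M : Matrix (Fin n) (Fin n) ℝ) (i : Fin n) : ℝ :=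
  halfSumDiff n (sortDesc (List.ofFn fun j : Fin n => if j = i then 0 else M i j))

/-- The `i`-th Gershgorin disc of the second type of `M`. -/
noncomputable def secondTypeDisc {n : ℕ} (M : Matrix (Fin n) (Fin n) ℝ) (i : Fin n) : Set ℂ :=
  Metric.closedBall ((M i i : ℝ) : ℂ) (secondTypeRadius M i)

/-- The Gershgorin region of the second type of `M`. -/
noncomputable def secondTypeRegion {n : ℕ} (M : Matrix (Fin n) (Fin n) ℝ) : Set ℂ :=
  ⋃ i : Fin n, secondTypeDisc M i

/-- `μ` is a (complex) eigenvalue of the real matrix `A`, i.e. a complex root of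
its characteristic polynomial. -/
def IsEigenvalueC {n : ℕ} (A : Matrix (Fin n) (Fin n) ℝ) (μ : ℂ) : Prop :=
  ((A.map ((↑) : ℝ → ℂ)).charpoly).IsRoot μ

/-- The `k`-th largest element (1-indexed) among the `n - 1` off-diagonal entries of
column `j` of `B`. -/
noncomputable def kthLargestOffDiag {n : ℕ} (B : Matrix (Fin n) (Fin n) ℝ) (j : Fin n)
    (k : ℕ) : ℝ :=
  (sortDesc (((List.ofFn fun i : Fin n => B i j).eraseIdx j.val))).getD (k - 1) 0

/-- The ℓ_p norm of a vector in ℝ^n. -/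
noncomputable def lpNorm {n : ℕ} (p : ℝ≥0∞) (x : Fin n → ℝ) : ℝ :=
  @norm (PiLp p fun _ : Fin n => ℝ) _ ((WithLp.equiv p (∀ _ : Fin n, ℝ)).symm x)

/-- The seminorm-like quantity `τ_p(B)`: the supremum of `‖Bᵀ x‖_p` over all real
vectors `x` with `xᵀ e = 0` and `‖x‖_p = 1`. -/
noncomputable def tau {n : ℕ} (p : ℝ≥0∞) (B : Matrix (Fin n) (Fin n) ℝ) : ℝ :=
  sSup { t : ℝ | ∃ x : Fin n → ℝ, (∑ i, x i) = 0 ∧ lpNorm p x = 1 ∧ t = lpNorm p (Bᵀ *ᵥ x) }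

/-- The Ostrowski–Brauer set `Γ(M)` of a real square matrix `M`. -/
noncomputable def brauerSet {n : ℕ} (M : Matrix (Fin n) (Fin n) ℝ) : Set ℂ :=
  ⋃ (i : Fin n) (j : Fin n) (_ : i < j),
    { y : ℂ | ‖y - (M i i : ℝ)‖ * ‖y - (M j j : ℝ)‖ ≤
        (∑ k ∈ Finset.univ.filter fun k => k ≠ i, |M i k|) *
        (∑ k ∈ Finset.univ.filter fun k => k ≠ j, |M j k|) }

/-- `cs_j(A)` from Definition 2.3: sorted column sums difference. -/
noncomputable def csCol {n : ℕ} (A : Matrix (Fin n) (Fin n) ℝ) (j : Fin n) : ℝ :=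
  halfSumDiff n (sortDesc (List.ofFn fun i : Fin n => A i j))


/-!
Put `B = D⁻¹ A D`, so that `B 𝟙 = λ 𝟙`. Then `Bᵀ` maps the hyperplane `W = {x | ∑ xᵢ = 0}`
into itself and acts on the one-dimensional quotient by `λ`, whence
`det A = det B = λ · det (Bᵀ|_W)`. On `W` with the `ℓ_p` norm, `(Bᵀ|_W)ᵏ = (Bᵏ)ᵀ|_W` has operator
norm at most `τ_p(Bᵏ)`, and `|det T| ≤ ‖T‖ ^ dim` for every operator `T` (if `‖T‖ < 1` then
`(det T)ᵏ = det Tᵏ → 0`). As `dim W = n - 1`, this gives `|det (Bᵀ|_W)|ᵏ ≤ τ_p(Bᵏ) ^ (n - 1)`.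
-/

open Filter Topology Module

section DetBound

variable {𝕜 E : Type*} [RCLike 𝕜] [NormedAddCommGroup E] [NormedSpace 𝕜 E]
  [FiniteDimensional 𝕜 E]

theorem ContinuousLinearMap.norm_det_lt_one_of_norm_lt_one (hE : 0 < finrank 𝕜 E)
    {T : E →L[𝕜] E} (hT : ‖T‖ < 1) : ‖T.det‖ < 1 := by
  have hpow : Tendsto (fun k : ℕ ↦ (T ^ k).det) atTop (𝓝 (0 : E →L[𝕜] E).det) :=
    (continuous_det.tendsto 0).comp (tendsto_pow_atTop_nhds_zero_of_norm_lt_one hT)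
  simp only [det, toLinearMap_pow, map_pow, toLinearMap_zero, LinearMap.det_zero,
    zero_pow hE.ne'] at hpow
  exact tendsto_pow_atTop_nhds_zero_iff_norm_lt_one.mp hpow

theorem ContinuousLinearMap.norm_det_le_norm_pow (T : E →L[𝕜] E) :
    ‖T.det‖ ≤ ‖T‖ ^ finrank 𝕜 E := by
  rcases (finrank 𝕜 E).eq_zero_or_pos with hE | hE
  · simp [det, LinearMap.det_eq_one_of_finrank_eq_zero hE, hE]
  have hlt : ∀ r > ‖T‖, ‖T.det‖ ≤ r ^ finrank 𝕜 E := by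
    intro r hr
    have hr0 : 0 < r := (norm_nonneg T).trans_lt hr
    have hscaled : ‖((r : 𝕜)⁻¹ • T).det‖ < 1 := by
      refine norm_det_lt_one_of_norm_lt_one hE ?_
      rw [norm_smul, norm_inv, RCLike.norm_ofReal, abs_of_pos hr0, inv_mul_lt_one₀ hr0]
      exact hr
    rw [det, toLinearMap_smul, LinearMap.det_smul, norm_mul, norm_pow, norm_inv, RCLike.norm_ofReal,
      abs_of_pos hr0, inv_pow, inv_mul_lt_one₀ (by positivity)] at hscaled
    exact hscaled.le
  exact ge_of_tendsto ((continuous_pow _).continuousWithinAt (s := Set.Ioi ‖T‖))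
    (eventually_nhdsWithin_of_forall hlt)

theorem LinearMap.norm_det_le_pow_finrank {f : E →ₗ[𝕜] E} {C : ℝ} (hC : 0 ≤ C)
    (hf : ∀ x, ‖f x‖ ≤ C * ‖x‖) : ‖f.det‖ ≤ C ^ finrank 𝕜 E :=
  calc ‖f.det‖ = ‖(f.mkContinuous C hf).det‖ := rfl
    _ ≤ ‖f.mkContinuous C hf‖ ^ finrank 𝕜 E := (f.mkContinuous C hf).norm_det_le_norm_pow
    _ ≤ C ^ finrank 𝕜 E := by gcongr; exact f.mkContinuous_norm_le hC hf

end DetBound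

section KernelOfEigenfunctional

variable {K V : Type*} [Field K] [AddCommGroup V] [Module K V] {f : V →ₗ[K] V}
  {φ : Dual K V} {c : K}

theorem Module.Dual.apply_mem_ker_of_comp_eq_smul (hf : φ ∘ₗ f = c • φ) :
    ∀ x ∈ LinearMap.ker φ, f x ∈ LinearMap.ker φ := fun x hx ↦ by
  simpa [LinearMap.mem_ker.mp hx] using LinearMap.congr_fun hf x

theorem LinearMap.det_eq_mul_det_restrict_ker [FiniteDimensional K V] (hφ : φ ≠ 0)
    (hf : φ ∘ₗ f = c • φ) :
    f.det = c * (f.restrict (φ.apply_mem_ker_of_comp_eq_smul hf)).det := by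
  have hW := φ.apply_mem_ker_of_comp_eq_smul hf
  have hQ : (LinearMap.ker φ).mapQ (LinearMap.ker φ) f hW = c • LinearMap.id := by
    ext x
    refine (Submodule.Quotient.eq _).mpr ?_
    simpa [sub_eq_zero] using LinearMap.congr_fun hf x
  have hrank : finrank K (V ⧸ LinearMap.ker φ) = 1 := by
    have := (LinearMap.ker φ).finrank_quotient_add_finrank
    have := φ.finrank_ker_add_one_of_ne_zero hφ
    omega
  rw [LinearMap.det_eq_det_mul_det (LinearMap.ker φ) f hW, hQ, LinearMap.det_smul, hrank,
    LinearMap.det_id, pow_one, mul_one, mul_comm]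

end KernelOfEigenfunctional

section SumCoords

variable (p : ℝ≥0∞) (ι : Type*) [Fintype ι]

def sumCoords : Dual ℝ (WithLp p (ι → ℝ)) where
  toFun x := ∑ i, x i
  map_add' x y := by simp [Finset.sum_add_distrib]
  map_smul' c x := by simp [Finset.mul_sum]

variable {p ι}

@[simp]
theorem sumCoords_apply (x : WithLp p (ι → ℝ)) : sumCoords p ι x = ∑ i, x i := rfl

theorem sumCoords_ne_zero [Nonempty ι] : sumCoords p ι ≠ 0 := fun h ↦ by
  simpa using LinearMap.congr_fun h (WithLp.toLp p 1)

theorem finrank_ker_sumCoords [Nonempty ι] :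
    finrank ℝ (LinearMap.ker (sumCoords p ι)) = Fintype.card ι - 1 := by
  have := (sumCoords p ι).finrank_ker_add_one_of_ne_zero sumCoords_ne_zero
  rw [(WithLp.linearEquiv p ℝ (ι → ℝ)).finrank_eq, finrank_fintype_fun_eq_card] at this
  omega

theorem sumCoords_comp_toLpLin_transpose [DecidableEq ι] {B : Matrix ι ι ℝ} {lam : ℝ}
    (hB : B *ᵥ 1 = lam • 1) : sumCoords p ι ∘ₗ toLpLin p p Bᵀ = lam • sumCoords p ι := by
  ext x
  have : ∑ i, (Bᵀ *ᵥ x.ofLp) i = lam * ∑ i, x i := by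
    rw [← dotProduct_one, dotProduct_comm, dotProduct_mulVec, vecMul_transpose, hB,
      smul_dotProduct, one_dotProduct, smul_eq_mul]
  simpa [toLpLin_apply] using this

end SumCoords

theorem le_rpow_div_of_pow_le_pow {a c : ℝ} {k m : ℕ} (ha : 0 ≤ a) (hc : 0 ≤ c) (hk : k ≠ 0)
    (h : a ^ k ≤ c ^ m) : a ≤ c ^ ((m : ℝ) / k) :=
  calc a = (a ^ k) ^ (k⁻¹ : ℝ) := (Real.pow_rpow_inv_natCast ha hk).symm
    _ ≤ (c ^ m) ^ (k⁻¹ : ℝ) := by gcongr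
    _ = c ^ ((m : ℝ) / k) := by rw [← Real.rpow_natCast, ← Real.rpow_mul hc, div_eq_mul_inv]

section Tau

variable {n : ℕ} {p : ℝ≥0∞} [Fact (1 ≤ p)]

theorem tau_nonneg (B : Matrix (Fin n) (Fin n) ℝ) : 0 ≤ tau p B :=
  Real.sSup_nonneg <| by rintro _ ⟨x, -, -, rfl⟩; exact norm_nonneg _

theorem norm_toLpLin_transpose_le_tau (B : Matrix (Fin n) (Fin n) ℝ)
    {x : WithLp p (Fin n → ℝ)} (hx : ∑ i, x i = 0) :
    ‖toLpLin p p Bᵀ x‖ ≤ tau p B * ‖x‖ := by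
  rcases eq_or_ne x 0 with rfl | hx0
  · simp
  set T := LinearMap.toContinuousLinearMap (toLpLin p p Bᵀ)
  have hbdd : BddAbove {t : ℝ | ∃ y : Fin n → ℝ, ∑ i, y i = 0 ∧ lpNorm p y = 1 ∧
      t = lpNorm p (Bᵀ *ᵥ y)} := by
    refine ⟨‖T‖, ?_⟩
    rintro _ ⟨y, -, hy, rfl⟩
    calc lpNorm p (Bᵀ *ᵥ y) = ‖T (WithLp.toLp p y)‖ := rfl
      _ ≤ ‖T‖ * lpNorm p y := T.le_opNorm _
      _ = ‖T‖ := by rw [hy, mul_one]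
  have hxn : 0 < ‖x‖ := norm_pos_iff.mpr hx0
  have hunit : ‖toLpLin p p Bᵀ (‖x‖⁻¹ • x)‖ ≤ tau p B := by
    refine le_csSup hbdd ⟨(‖x‖⁻¹ • x).ofLp, ?_, ?_, rfl⟩
    · simp [← Finset.mul_sum, hx]
    · simp [lpNorm, norm_smul, hxn.ne']
  rw [map_smul, norm_smul, norm_inv, norm_norm, inv_mul_le_iff₀ hxn] at hunit
  linarith

theorem abs_det_le_mul_tau_rpow (hn : 0 < n) {B : Matrix (Fin n) (Fin n) ℝ} {lam : ℝ}
    (hB : B *ᵥ 1 = lam • 1) {k : ℕ} (hk : k ≠ 0) :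
    |B.det| ≤ |lam| * tau p (B ^ k) ^ (((n - 1 : ℕ) : ℝ) / k) := by
  have : NeZero n := ⟨hn.ne'⟩
  have hT := sumCoords_comp_toLpLin_transpose (p := p) hB
  set R := (toLpLin p p Bᵀ).restrict
    ((sumCoords p (Fin n)).apply_mem_ker_of_comp_eq_smul hT)
  have hdet : B.det = lam * R.det := by
    rw [← det_transpose, ← LinearMap.det_toLpLin p,
      LinearMap.det_eq_mul_det_restrict_ker sumCoords_ne_zero hT]
  have hRk : ∀ x, ‖(R ^ k) x‖ ≤ tau p (B ^ k) * ‖x‖ := fun x ↦ by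
    rw [Module.End.pow_restrict, Submodule.coe_norm, LinearMap.coe_restrict_apply, ← toLpLin_pow,
      ← transpose_pow, Submodule.coe_norm]
    exact norm_toLpLin_transpose_le_tau _ x.2
  have hdetRk : |R.det| ^ k ≤ tau p (B ^ k) ^ (n - 1) := by
    have := LinearMap.norm_det_le_pow_finrank (tau_nonneg _) hRk
    rwa [finrank_ker_sumCoords, Fintype.card_fin, map_pow, norm_pow, Real.norm_eq_abs] at this
  rw [hdet, abs_mul]
  gcongr
  exact le_rpow_div_of_pow_le_pow (abs_nonneg _) (tau_nonneg _) hk hdetRk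

end Tau

theorem stmt14_general {n : ℕ} (hn : 2 ≤ n) (A : Matrix (Fin n) (Fin n) ℝ)
    (lam : ℝ) (v : Fin n → ℝ) (hv : ∀ i, v i ≠ 0) (hAv : A *ᵥ v = lam • v)
    (D : Matrix (Fin n) (Fin n) ℝ) (hD : D = Matrix.diagonal v)
    (p : ℝ≥0∞) (hp : 1 ≤ p) :
    (∀ k : ℕ, 0 < k →
        |A.det| ≤ |lam| * (tau p (D⁻¹ * A ^ k * D)) ^ (((n : ℝ) - 1) / k)) ∧
      |A.det| ≤ |lam| * tau p (D⁻¹ * A ^ (n - 1) * D) := by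
  have : Fact (1 ≤ p) := ⟨hp⟩
  have hDu : IsUnit D := hD ▸ isUnit_diagonal.mpr (Pi.isUnit_iff.mpr fun i ↦ (hv i).isUnit)
  have hD1 : D *ᵥ 1 = v := by ext i; simp [hD, mulVec_diagonal]
  have hB : (D⁻¹ * A * D) *ᵥ 1 = lam • 1 := by
    rw [← mulVec_mulVec, ← mulVec_mulVec, hD1, hAv, mulVec_smul, ← hD1, mulVec_mulVec,
      nonsing_inv_mul D ((isUnit_iff_isUnit_det D).mp hDu), one_mulVec]
  have hpow (k : ℕ) : D⁻¹ * A ^ k * D = (D⁻¹ * A * D) ^ k := by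
    rw [← hDu.unit_spec, ← coe_units_inv, Units.conj_pow']
  have hbound (k : ℕ) (hk : 0 < k) :
      |A.det| ≤ |lam| * tau p (D⁻¹ * A ^ k * D) ^ (((n : ℝ) - 1) / k) := by
    rw [← det_conj' hDu A, hpow, ← Nat.cast_pred (by omega)]
    exact abs_det_le_mul_tau_rpow (by omega) hB hk.ne'
  refine ⟨hbound, ?_⟩
  have hn1 : (n : ℝ) - 1 ≠ 0 := sub_ne_zero.mpr (by exact_mod_cast (by omega : n ≠ 1))
  simpa [Nat.cast_pred (by omega : 0 < n), div_self hn1] using hbound (n - 1) (by omega)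

/-- Corollary 4: if `A v = λ v` with all components of `v` nonzero and
`D = diag v`, then `|det A| ≤ |λ| · (τ_p(D⁻¹ A^k D))^{(n-1)/k}` for every admissible
`p` and every positive integer `k`; in particular
`|det A| ≤ |λ| · τ_p(D⁻¹ A^{n-1} D)`. -/
theorem stmt14 {n : ℕ} (hn : 2 ≤ n) (A : Matrix (Fin n) (Fin n) ℝ)
    (lam : ℝ) (v : Fin n → ℝ) (hv : ∀ i, v i ≠ 0) (hAv : A *ᵥ v = lam • v)
    (D : Matrix (Fin n) (Fin n) ℝ) (hD : D = Matrix.diagonal v)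
    (p : ℝ≥0∞) (hp : 1 ≤ p) (hp' : p = ⊤ ∨ ∃ m : ℕ, p = m) :
    (∀ k : ℕ, 0 < k →
        |A.det| ≤ |lam| * (tau p (D⁻¹ * A ^ k * D)) ^ (((n : ℝ) - 1) / k)) ∧
      |A.det| ≤ |lam| * tau p (D⁻¹ * A ^ (n - 1) * D) :=
  stmt14_general hn A lam v hv hAv D hD p hp
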